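/- D_2^2(K_{4,3,2}) = 3; that is: (i) every 2-coloring of the edges of the complete tripartite graph K_{4,3,2} admits two monochromatic subgraphs, each of diameter at most 3, whose vertex sets cover all vertices, and (ii) there exists a 2-coloring of the edges of K_{4,3,2} such that no two monochromatic subgraphs, each of diameter at most 2, have vertex sets covering all vertices. -/

import Mathlib

open SimpleGraph

/-- The spanning subgraph of `G` consisting of the edges that receive color `b`
under the edge-coloring `c`. -/
def SimpleGraph.colorSubgraph {V : Type*} (G : SimpleGraph V) (c : Sym2 V → Bool) (b : Bool) :
    SimpleGraph V where
  Adj u v := G.Adj u v ∧ c s(u, v) = b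
  symm := ⟨fun u v h => ⟨h.1.symm, by rw [Sym2.eq_swap]; exact h.2⟩⟩
  loopless := ⟨fun u h => h.1.ne rfl⟩

/-- There are two monochromatic connected subgraphs, each of diameter at most `d`,
whose vertex sets together cover all of `V`. -/
def HasMonoCover {V : Type*} (G : SimpleGraph V) (c : Sym2 V → Bool) (d : ℕ) : Prop :=
  ∃ (S₁ S₂ : Set V) (b₁ b₂ : Bool),
    (SimpleGraph.induce S₁ (G.colorSubgraph c b₁)).Connected ∧
    (SimpleGraph.induce S₁ (G.colorSubgraph c b₁)).ediam ≤ (d : ℕ∞) ∧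
    (SimpleGraph.induce S₂ (G.colorSubgraph c b₂)).Connected ∧
    (SimpleGraph.induce S₂ (G.colorSubgraph c b₂)).ediam ≤ (d : ℕ∞) ∧
    S₁ ∪ S₂ = Set.univ

/-!
Upper bound. Let `u`, `v` be two vertices adjacent to all others (the part of size two). If some
third vertex `w` sees `u` and `v` in the same colour `b`, then `u`, `v` and the `b`-neighbours of `u`
span a `b`-coloured subgraph of diameter at most three (`v` is at distance two through `w`), and `u`
with its other neighbours spans a star. Otherwise every third vertex sees exactly one of `u`, `v` in
colour `true`, so the two `true`-stars at `u` and `v` cover.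

Lower bound. In a cover by subgraphs of diameter at most two, any two vertices of either set are
joined by a monochromatic path of length at most two inside that set. One of the sets has at least
five of the nine vertices, and for the colouring below an exhaustive check shows that no such set
can be completed to a cover in this way.
-/

namespace SimpleGraph

variable {V : Type*}

theorem connected_and_ediam_le_three_of_edist_le (K : SimpleGraph V) (u s : V)
    (hu : ∀ x, x ≠ s → K.edist u x ≤ 1) (hs : K.edist u s ≤ 2) :
    K.Connected ∧ K.ediam ≤ 3 := by
  have hle_two (x : V) : K.edist u x ≤ 2 := by
    rcases eq_or_ne x s with rfl | hx
    · exact hs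
    · exact (hu x hx).trans (by norm_num)
  refine ⟨K.connected_iff_exists_forall_reachable.2 ⟨u, fun x => ?_⟩, ediam_le_iff.2 fun x y => ?_⟩
  · exact reachable_of_edist_ne_top ((hle_two x).trans_lt (by decide)).ne
  rcases eq_or_ne x y with rfl | hxy
  · simp
  calc K.edist x y ≤ K.edist u x + K.edist u y := by
        rw [K.edist_comm (u := u)]; exact K.edist_triangle
    _ ≤ 3 := by
      rcases eq_or_ne x s with rfl | hx
      · calc K.edist u x + K.edist u y ≤ 2 + 1 := add_le_add hs (hu y hxy.symm)
          _ = 3 := by norm_num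
      · calc K.edist u x + K.edist u y ≤ 1 + 2 := add_le_add (hu x hx) (hle_two y)
          _ = 3 := by norm_num

theorem connected_and_ediam_induce_le_three (H : SimpleGraph V) {u s : V}
    (hs : s = u ∨ ∃ y, H.Adj u y ∧ H.Adj y s) :
    (H.induce (insert u (insert s (H.neighborSet u)))).Connected ∧
      (H.induce (insert u (insert s (H.neighborSet u)))).ediam ≤ 3 := by
  set S := insert u (insert s (H.neighborSet u))
  have hu : u ∈ S := Set.mem_insert _ _
  refine connected_and_ediam_le_three_of_edist_le _ ⟨u, hu⟩ ⟨s, by simp [S]⟩ ?_ ?_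
  · rintro ⟨x, hx⟩ hxs
    rw [edist_le_one_iff_adj_or_eq]
    rcases hx with rfl | rfl | hx
    · exact Or.inr rfl
    · exact absurd rfl hxs
    · exact Or.inl hx
  · rcases hs with rfl | ⟨y, huy, hys⟩
    · simp
    · have hy : y ∈ S := by simp [S, huy]
      have huy' : (H.induce S).Adj ⟨u, hu⟩ ⟨y, hy⟩ := huy
      have hys' : (H.induce S).Adj ⟨y, hy⟩ ⟨s, by simp [S]⟩ := hys
      simpa using (Walk.cons huy' (.cons hys' .nil)).edist_le

@[simp]
theorem colorSubgraph_adj {G : SimpleGraph V} {c : Sym2 V → Bool} {b : Bool} {x y : V} :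
    (G.colorSubgraph c b).Adj x y ↔ G.Adj x y ∧ c s(x, y) = b :=
  Iff.rfl

instance (G : SimpleGraph V) [DecidableRel G.Adj] (c : Sym2 V → Bool) (b : Bool) :
    DecidableRel (G.colorSubgraph c b).Adj :=
  fun x y => inferInstanceAs (Decidable (G.Adj x y ∧ c s(x, y) = b))

def IsMonoDiamLe (G : SimpleGraph V) (c : Sym2 V → Bool) (d : ℕ) (S : Set V) : Prop :=
  ∃ b, ((G.colorSubgraph c b).induce S).Connected ∧ ((G.colorSubgraph c b).induce S).ediam ≤ d

theorem hasMonoCover_iff {G : SimpleGraph V} {c : Sym2 V → Bool} {d : ℕ} :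
    HasMonoCover G c d ↔
      ∃ S₁ S₂, G.IsMonoDiamLe c d S₁ ∧ G.IsMonoDiamLe c d S₂ ∧ S₁ ∪ S₂ = Set.univ := by
  constructor
  · rintro ⟨S₁, S₂, b₁, b₂, hc₁, hd₁, hc₂, hd₂, hS⟩
    exact ⟨S₁, S₂, ⟨b₁, hc₁, hd₁⟩, ⟨b₂, hc₂, hd₂⟩, hS⟩
  · rintro ⟨S₁, S₂, ⟨b₁, hc₁, hd₁⟩, ⟨b₂, hc₂, hd₂⟩, hS⟩
    exact ⟨S₁, S₂, b₁, b₂, hc₁, hd₁, hc₂, hd₂, hS⟩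

theorem isMonoDiamLe_three_insert_insert_neighborSet (G : SimpleGraph V) (c : Sym2 V → Bool)
    (b : Bool) {u s : V}
    (hs : s = u ∨ ∃ y, (G.colorSubgraph c b).Adj u y ∧ (G.colorSubgraph c b).Adj y s) :
    G.IsMonoDiamLe c 3 (insert u (insert s ((G.colorSubgraph c b).neighborSet u))) :=
  ⟨b, connected_and_ediam_induce_le_three _ hs⟩

theorem isMonoDiamLe_three_insert_neighborSet (G : SimpleGraph V) (c : Sym2 V → Bool) (b : Bool)
    (u : V) : G.IsMonoDiamLe c 3 (insert u ((G.colorSubgraph c b).neighborSet u)) := by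
  simpa using isMonoDiamLe_three_insert_insert_neighborSet G c b (Or.inl rfl : u = u ∨ _)

theorem hasMonoCover_three_of_forall_adj (G : SimpleGraph V) (c : Sym2 V → Bool) {u v : V}
    (hu : ∀ x, x ≠ u → x ≠ v → G.Adj u x) (hv : ∀ x, x ≠ u → x ≠ v → G.Adj v x) :
    HasMonoCover G c 3 := by
  rw [hasMonoCover_iff]
  by_cases h : ∃ w, w ≠ u ∧ w ≠ v ∧ c s(u, w) = c s(v, w)
  · obtain ⟨w, hwu, hwv, hw⟩ := h
    refine ⟨_, _, isMonoDiamLe_three_insert_insert_neighborSet G c (c s(u, w)) (s := v)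
      (Or.inr ⟨w, ⟨hu w hwu hwv, rfl⟩, (hv w hwu hwv).symm, by rw [Sym2.eq_swap, hw]⟩),
      isMonoDiamLe_three_insert_neighborSet G c (!c s(u, w)) u, ?_⟩
    refine Set.eq_univ_of_forall fun x => ?_
    rcases eq_or_ne x u with rfl | hxu
    · simp
    rcases eq_or_ne x v with rfl | hxv
    · simp
    simp [hxu, hxv, hu x hxu hxv, Bool.eq_or_eq_not]
  · simp only [not_exists, not_and] at h
    refine ⟨_, _, isMonoDiamLe_three_insert_neighborSet G c true u,
      isMonoDiamLe_three_insert_neighborSet G c true v, ?_⟩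
    refine Set.eq_univ_of_forall fun x => ?_
    rcases eq_or_ne x u with rfl | hxu
    · simp
    rcases eq_or_ne x v with rfl | hxv
    · simp
    have hvx : c s(v, x) = !c s(u, x) := Bool.eq_not_iff.2 (Ne.symm (h x hxu hxv))
    simp [hxu, hxv, hu x hxu hxv, hv x hxu hxv, hvx]

def IsTwoCloseOn (H : SimpleGraph V) (S : Set V) : Prop :=
  ∀ x ∈ S, ∀ y ∈ S, x = y ∨ H.Adj x y ∨ ∃ z ∈ S, H.Adj x z ∧ H.Adj z y

instance [DecidableEq V] (H : SimpleGraph V) [DecidableRel H.Adj] (S : Finset V) :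
    Decidable (H.IsTwoCloseOn S) :=
  inferInstanceAs <| Decidable <|
    ∀ x ∈ S, ∀ y ∈ S, x = y ∨ H.Adj x y ∨ ∃ z ∈ S, H.Adj x z ∧ H.Adj z y

theorem isTwoCloseOn_of_ediam_induce_le_two {H : SimpleGraph V} {S : Set V}
    (h : (H.induce S).ediam ≤ 2) : H.IsTwoCloseOn S := by
  intro x hx y hy
  have hxy : ¬ 2 < (H.induce S).edist ⟨x, hx⟩ ⟨y, hy⟩ := (edist_le_ediam.trans h).not_gt
  simp only [two_lt_edist_iff, ne_eq, Subtype.mk.injEq, induce_adj, not_and] at hxy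
  refine or_iff_not_imp_left.2 fun hne => or_iff_not_imp_left.2 fun hadj => ?_
  obtain ⟨⟨z, hz⟩, hxz, hyz⟩ := Set.nonempty_iff_ne_empty.2 (hxy hne hadj)
  exact ⟨z, hz, hxz, hyz.symm⟩

theorem IsMonoDiamLe.isTwoCloseOn {G : SimpleGraph V} {c : Sym2 V → Bool} {S : Set V}
    (h : G.IsMonoDiamLe c 2 S) : ∃ b, (G.colorSubgraph c b).IsTwoCloseOn S :=
  h.imp fun _ hb => isTwoCloseOn_of_ediam_induce_le_two hb.2

end SimpleGraph

abbrev V432 := Σ i : Fin 3, Fin (![4, 3, 2] i)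

abbrev K432 : SimpleGraph V432 := completeMultipartiteGraph fun i : Fin 3 => Fin (![4, 3, 2] i)

namespace K432

instance : DecidableRel K432.Adj := fun x y => inferInstanceAs (Decidable (x.1 ≠ y.1))

theorem hasMonoCover_three (c : Sym2 V432 → Bool) : HasMonoCover K432 c 3 :=
  hasMonoCover_three_of_forall_adj K432 c (u := ⟨2, 0, by decide⟩) (v := ⟨2, 1, by decide⟩)
    (by decide) (by decide)

-- The vertex `⟨i, j⟩` is labelled `10 * i + j`; the colour is `true` exactly on the listed edges.
def trueEdges : List (ℕ × ℕ) :=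
  [(0, 10), (0, 20), (1, 12), (1, 21), (2, 10), (2, 12), (2, 20), (2, 21), (3, 10), (3, 11),
    (3, 21), (10, 20), (12, 20)]

def label (x : V432) : ℕ := 10 * x.1 + x.2

def isTrueEdge (x y : V432) : Bool :=
  (label x, label y) ∈ trueEdges || (label y, label x) ∈ trueEdges

def coloring : Sym2 V432 → Bool := Sym2.lift ⟨isTrueEdge, fun _ _ => Bool.or_comm ..⟩

theorem not_isTwoCloseOn_of_cover_of_five_le_card :
    ∀ (S : Finset V432) (b₁ : Bool), 5 ≤ S.card →
      (K432.colorSubgraph coloring b₁).IsTwoCloseOn S → ∀ (b₂ : Bool) (T : Finset V432),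
      (∀ x, x ∈ S ∨ x ∈ T) → ¬ (K432.colorSubgraph coloring b₂).IsTwoCloseOn T := by
  decide +kernel

theorem not_hasMonoCover_two_coloring : ¬ HasMonoCover K432 coloring 2 := by
  classical
  rw [hasMonoCover_iff]
  rintro ⟨S₁, S₂, h₁, h₂, hS⟩
  obtain ⟨b₁, h₁⟩ := h₁.isTwoCloseOn
  obtain ⟨b₂, h₂⟩ := h₂.isTwoCloseOn
  rw [← Set.coe_toFinset S₁] at h₁ hS
  rw [← Set.coe_toFinset S₂] at h₂ hS
  set s₁ := S₁.toFinset
  set s₂ := S₂.toFinset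
  have hcover : ∀ x, x ∈ s₁ ∨ x ∈ s₂ := by
    simpa [Set.eq_univ_iff_forall] using hS
  have hcard : 9 ≤ s₁.card + s₂.card := calc
    9 = (Finset.univ : Finset V432).card := rfl
    _ ≤ (s₁ ∪ s₂).card := Finset.card_le_card fun x _ => Finset.mem_union.2 (hcover x)
    _ ≤ s₁.card + s₂.card := Finset.card_union_le _ _
  rcases le_or_gt 5 s₁.card with h | h
  · exact not_isTwoCloseOn_of_cover_of_five_le_card s₁ b₁ h h₁ b₂ s₂ hcover h₂
  · exact not_isTwoCloseOn_of_cover_of_five_le_card s₂ b₂ (by omega) h₂ b₁ s₁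
      (fun x => (hcover x).symm) h₁

end K432

theorem stmt4 :
    (∀ col : Sym2 (Σ i : Fin 3, Fin (![4, 3, 2] i)) → Bool,
      HasMonoCover (completeMultipartiteGraph (fun i : Fin 3 => Fin (![4, 3, 2] i))) col 3) ∧
    (∃ col : Sym2 (Σ i : Fin 3, Fin (![4, 3, 2] i)) → Bool,
      ¬ HasMonoCover (completeMultipartiteGraph (fun i : Fin 3 => Fin (![4, 3, 2] i))) col 2) :=
  ⟨K432.hasMonoCover_three, K432.coloring, K432.not_hasMonoCover_two_coloring⟩
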